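/- Assume additionally that Y_1 ≤ Y_2 ≤ … ≤ Y_m and that the infimum z^OPT is attained at some (β^OPT, β₀^OPT). Then z^OPT ≤ z^approx ≤ (n/k) · z^OPT. -/

import Mathlib

/-- `σ(x, y) = (x - y)²` if `x > 2y`, and `σ(x, y) = y²` if `x ≤ 2y`. -/
noncomputable def sigmaFn (x y : ℝ) : ℝ := if x > 2 * y then (x - y) ^ 2 else y ^ 2

/-- The family `𝔽_k` of subsets `I ⊆ {1,…,m}` whose complement in `{1,…,m}` has the form
`{1,…,i₁} ∪ {i₂,…,i_j}` for some `j ∈ {1,…,k}` and `0 ≤ i₁ < i₂ < … < i_j ≤ m`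
(the finite set `t` collects the `j - 1` indices `i₂ < … < i_j`). -/
def approxFamily (m k : ℕ) : Set (Finset ℕ) :=
  {I | I ⊆ Finset.Icc 1 m ∧
    ∃ (j i₁ : ℕ) (t : Finset ℕ),
      1 ≤ j ∧ j ≤ k ∧ i₁ ≤ m ∧ t.card = j - 1 ∧
      (∀ x ∈ t, i₁ < x ∧ x ≤ m) ∧
      Finset.Icc 1 m \ I = Finset.Icc 1 i₁ ∪ t}

/-!
Since `Y_i > 0` for `i ≤ m`, every term of `f^σ_I` dominates the corresponding term of `F`, so
`z^OPT ≤ z^approx`. For the upper bound, evaluate at the optimum, with predictions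
`c_i = X_iᵀβ + β₀`, and let `S` be the samples `i ≤ m` with `c_i ≤ 0`. If the complement of `I`
contains `S`, then `f^σ_I` exceeds `F` only at samples outside `I` with `c_i > 0`, and there by
at most `Y_i²`. If `|S| < k`, the complement `S` is admissible and there is no excess at all.
Otherwise let `i₁` be the `k`-th largest element of `S` and take the complement
`{1,…,i₁} ∪ {i ∈ S | i > i₁}`: the excess is at most `Y_{i₁}²` at each of at most `m - k`
samples below `i₁`, while the `k` largest elements of `S` contribute at least `k·Y_{i₁}²` to
`z^OPT`, because `Y` is nondecreasing.
-/

open Finset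

lemma sq_max_zero_sub_le_sq_sub {x y : ℝ} (hy : 0 ≤ y) : (max 0 x - y) ^ 2 ≤ (x - y) ^ 2 := by
  rcases le_total x 0 with hx | hx
  · rw [max_eq_left hx]; nlinarith
  · rw [max_eq_right hx]

lemma sq_max_zero_sub_le_sigmaFn {x y : ℝ} (hy : 0 ≤ y) : (max 0 x - y) ^ 2 ≤ sigmaFn x y := by
  unfold sigmaFn
  split_ifs with h
  · rw [max_eq_right (by linarith)]
  · rcases le_total x 0 with hx | hx
    · rw [max_eq_left hx]; nlinarith
    · rw [max_eq_right hx]; nlinarith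

lemma sigmaFn_le_sq_max_zero_sub_add {x y : ℝ} (hy : 0 ≤ y) :
    sigmaFn x y ≤ (max 0 x - y) ^ 2 + if 0 < x then y ^ 2 else 0 := by
  unfold sigmaFn
  split_ifs with h hx hx
  · rw [max_eq_right hx.le]; nlinarith
  · linarith
  · nlinarith [sq_nonneg (max 0 x - y)]
  · rw [max_eq_left (not_lt.mp hx)]; simp

section Losses

-- `c i` stands for the prediction `X_iᵀβ + β₀`, so that `F = reluLoss c Y (Icc 1 n)` and
-- `f^σ_I = sigmaLoss c Y (Icc 1 m) I + φ`.
variable (c Y : ℕ → ℝ)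

def reluLoss (s : Finset ℕ) : ℝ := ∑ i ∈ s, (max 0 (c i) - Y i) ^ 2

noncomputable def sigmaLoss (s I : Finset ℕ) : ℝ :=
  ∑ i ∈ I, (c i - Y i) ^ 2 + ∑ i ∈ s \ I, sigmaFn (c i) (Y i)

variable {c Y}

lemma reluLoss_nonneg (s : Finset ℕ) : 0 ≤ reluLoss c Y s :=
  sum_nonneg fun _ _ => sq_nonneg _

lemma reluLoss_Icc_add {m n : ℕ} (hmn : m ≤ n) :
    reluLoss c Y (Icc 1 m) + reluLoss c Y (Icc (m + 1) n) = reluLoss c Y (Icc 1 n) := by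
  have := sum_Ioc_consecutive (fun i => (max 0 (c i) - Y i) ^ 2) (Nat.zero_le m) hmn
  simpa only [reluLoss, ← Icc_add_one_left_eq_Ioc, zero_add] using this

variable {s I : Finset ℕ}

lemma reluLoss_le_sigmaLoss (hI : I ⊆ s) (hY : ∀ i ∈ s, 0 ≤ Y i) :
    reluLoss c Y s ≤ sigmaLoss c Y s I := by
  rw [reluLoss, sigmaLoss, ← sum_sdiff hI, add_comm]
  exact add_le_add (sum_le_sum fun i hi => sq_max_zero_sub_le_sq_sub (hY i (hI hi)))
    (sum_le_sum fun i hi => sq_max_zero_sub_le_sigmaFn (hY i (sdiff_subset hi)))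

lemma sigmaLoss_sdiff_le {C : Finset ℕ} (hC : C ⊆ s) (hY : ∀ i ∈ s, 0 ≤ Y i)
    (hc : ∀ i ∈ s, c i ≤ 0 → i ∈ C) :
    sigmaLoss c Y s (s \ C) ≤ reluLoss c Y s + ∑ i ∈ C with 0 < c i, Y i ^ 2 := by
  have hsdiff : ∑ i ∈ s \ C, (c i - Y i) ^ 2 = ∑ i ∈ s \ C, (max 0 (c i) - Y i) ^ 2 :=
    sum_congr rfl fun i hi => by
      rw [max_eq_right (not_le.1 fun h => (mem_sdiff.1 hi).2 (hc i (mem_sdiff.1 hi).1 h)).le]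
  have hC_le : ∑ i ∈ C, sigmaFn (c i) (Y i) ≤
      ∑ i ∈ C, ((max 0 (c i) - Y i) ^ 2 + if 0 < c i then Y i ^ 2 else 0) :=
    sum_le_sum fun i hi => sigmaFn_le_sq_max_zero_sub_add (hY i (hC hi))
  rw [sum_add_distrib, ← sum_filter] at hC_le
  rw [sigmaLoss, reluLoss, Finset.sdiff_sdiff_eq_self hC, ← sum_sdiff hC, hsdiff]
  linarith

lemma card_mul_sq_le_reluLoss {K : Finset ℕ} {y : ℝ} (hK : K ⊆ s) (hc : ∀ i ∈ K, c i ≤ 0)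
    (hy : 0 ≤ y) (hyY : ∀ i ∈ K, y ≤ Y i) : #K * y ^ 2 ≤ reluLoss c Y s :=
  calc #K * y ^ 2 = ∑ _i ∈ K, y ^ 2 := by rw [sum_const, nsmul_eq_mul]
    _ ≤ ∑ i ∈ K, (max 0 (c i) - Y i) ^ 2 := sum_le_sum fun i hi => by
        rw [max_eq_left (hc i hi), zero_sub, neg_sq]
        exact pow_le_pow_left₀ hy (hyY i hi) 2
    _ ≤ reluLoss c Y s := sum_le_sum_of_subset_of_nonneg hK fun _ _ _ => sq_nonneg _

end Losses

lemma Finset.exists_mem_card_filter_lt_add_one_eq {α : Type*} [LinearOrder α] (S : Finset α)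
    {k : ℕ} (hk1 : 1 ≤ k) (hkS : k ≤ #S) : ∃ a ∈ S, #{x ∈ S | a < x} + 1 = k := by
  induction S using Finset.induction_on_min with
  | empty => simp at hkS; omega
  | insert a S haS ih =>
    have ha : a ∉ S := fun h => lt_irrefl a (haS a h)
    rw [card_insert_of_notMem ha] at hkS
    rcases hkS.eq_or_lt with hk | hk
    · refine ⟨a, mem_insert_self a S, ?_⟩
      rw [filter_insert, if_neg (lt_irrefl a), filter_true_of_mem haS, hk]
    · obtain ⟨b, hbS, hb⟩ := ih (by omega)
      refine ⟨b, mem_insert_of_mem hbS, ?_⟩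
      rwa [filter_insert, if_neg (haS b hbS).not_gt]

lemma sdiff_mem_approxFamily {m k i₁ : ℕ} {t : Finset ℕ} (hi₁ : i₁ ≤ m)
    (ht : ∀ x ∈ t, i₁ < x ∧ x ≤ m) (htk : #t < k) :
    Icc 1 m \ (Icc 1 i₁ ∪ t) ∈ approxFamily m k := by
  have hsub : Icc 1 i₁ ∪ t ⊆ Icc 1 m := union_subset (Icc_subset_Icc_right hi₁)
    fun x hx => mem_Icc.2 ⟨Nat.one_le_of_lt (ht x hx).1, (ht x hx).2⟩
  exact ⟨sdiff_subset, #t + 1, i₁, t, by omega, htk, hi₁, rfl, ht,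
    Finset.sdiff_sdiff_eq_self hsub⟩

lemma sum_sq_le_card_mul_sq {Y : ℕ → ℝ} {m a : ℕ} {Q : Finset ℕ} (hY : ∀ i ∈ Icc 1 m, 0 ≤ Y i)
    (hmono : MonotoneOn Y (Set.Icc 1 m)) (ha : 1 ≤ a) (ham : a ≤ m) (hQ : Q ⊆ Icc 1 a) :
    ∑ i ∈ Q, Y i ^ 2 ≤ #Q * Y a ^ 2 := by
  rw [← nsmul_eq_mul]
  refine sum_le_card_nsmul _ _ _ fun i hi => ?_
  obtain ⟨hi1, hia⟩ := mem_Icc.1 (hQ hi)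
  exact pow_le_pow_left₀ (hY i (mem_Icc.2 ⟨hi1, hia.trans ham⟩))
    (hmono ⟨hi1, hia.trans ham⟩ ⟨ha, ham⟩ hia) 2

section Selection

variable {c Y : ℕ → ℝ} {m k : ℕ}

noncomputable def inactiveSet (c : ℕ → ℝ) (m : ℕ) : Finset ℕ := {i ∈ Icc 1 m | c i ≤ 0}

lemma exists_mem_approxFamily_sigmaLoss_le_reluLoss (hY : ∀ i ∈ Icc 1 m, 0 ≤ Y i)
    (hk : #(inactiveSet c m) < k) :
    ∃ I ∈ approxFamily m k, sigmaLoss c Y (Icc 1 m) I ≤ reluLoss c Y (Icc 1 m) := by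
  set S := inactiveSet c m
  have hS : ∀ x ∈ S, 0 < x ∧ x ≤ m := fun x hx => by
    have := mem_Icc.1 (mem_filter.1 hx).1; omega
  refine ⟨_, sdiff_mem_approxFamily (Nat.zero_le m) hS hk, ?_⟩
  have hC : Icc 1 0 ∪ S ⊆ Icc 1 m := by simp [S, inactiveSet]
  have hSC : ∀ i ∈ Icc 1 m, c i ≤ 0 → i ∈ Icc 1 0 ∪ S := fun i hi hci => by
    simp [S, inactiveSet, hi, hci]
  have hexcess : ∑ i ∈ Icc 1 0 ∪ S with 0 < c i, Y i ^ 2 = 0 :=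
    sum_eq_zero fun i hi => by simp [S, inactiveSet] at hi; linarith
  simpa only [hexcess, add_zero] using sigmaLoss_sdiff_le hC hY hSC

lemma card_mul_sigmaLoss_le {i₁ : ℕ} (hi₁ : i₁ ∈ inactiveSet c m) (hY : ∀ i ∈ Icc 1 m, 0 ≤ Y i)
    (hmono : MonotoneOn Y (Set.Icc 1 m)) :
    (#{x ∈ inactiveSet c m | i₁ < x} + 1) *
        sigmaLoss c Y (Icc 1 m) (Icc 1 m \ (Icc 1 i₁ ∪ {x ∈ inactiveSet c m | i₁ < x})) ≤
      m * reluLoss c Y (Icc 1 m) := by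
  set S := inactiveSet c m
  set t := {x ∈ S | i₁ < x}
  set Q := {i ∈ Icc 1 i₁ ∪ t | 0 < c i}
  obtain ⟨hi₁1, hi₁m⟩ : 1 ≤ i₁ ∧ i₁ ≤ m := mem_Icc.1 (mem_filter.1 hi₁).1
  have ht : ∀ x ∈ t, i₁ < x ∧ x ≤ m := fun x hx => by simp [t, S, inactiveSet] at hx; omega
  have hC : Icc 1 i₁ ∪ t ⊆ Icc 1 m := union_subset (Icc_subset_Icc_right hi₁m)
    fun x hx => mem_Icc.2 ⟨Nat.one_le_of_lt (ht x hx).1, (ht x hx).2⟩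
  have hSC : ∀ i ∈ Icc 1 m, c i ≤ 0 → i ∈ Icc 1 i₁ ∪ t := fun i hi hci => by
    rcases le_or_gt i i₁ with h | h
    · exact mem_union_left _ (mem_Icc.2 ⟨(mem_Icc.1 hi).1, h⟩)
    · exact mem_union_right _ (mem_filter.2 ⟨mem_filter.2 ⟨hi, hci⟩, h⟩)
  have hQ : Q ⊆ Icc 1 i₁ := fun i hi => by simp [Q, t, S, inactiveSet] at hi ⊢; grind
  have hexcess := sum_sq_le_card_mul_sq hY hmono hi₁1 hi₁m hQ
  have hi₁t : i₁ ∉ t := by simp [t]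
  have hK : insert i₁ t ⊆ S := insert_subset hi₁ (filter_subset _ _)
  have hlower : (#t + 1 : ℝ) * Y i₁ ^ 2 ≤ reluLoss c Y (Icc 1 m) := by
    have := card_mul_sq_le_reluLoss (c := c) (Y := Y) (hK.trans (filter_subset _ _))
      (fun i hi => (mem_filter.1 (hK hi)).2) (hY i₁ (mem_Icc.2 ⟨hi₁1, hi₁m⟩)) fun i hi => ?_
    · rwa [card_insert_of_notMem hi₁t, Nat.cast_succ] at this
    rcases mem_insert.1 hi with rfl | hi
    · exact le_rfl
    · exact hmono ⟨hi₁1, hi₁m⟩ (mem_Icc.1 (hC (mem_union_right _ hi))) (ht i hi).1.le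
  have hcount : #Q + (#t + 1) ≤ m := by
    have hdisj : Disjoint Q (insert i₁ t) := disjoint_left.2 fun i hiQ hiK =>
      (not_lt.2 (mem_filter.1 (hK hiK)).2) (mem_filter.1 hiQ).2
    have := card_le_card (union_subset (s := Q) ((filter_subset _ _).trans hC)
      (hK.trans (filter_subset _ _)))
    rwa [card_union_of_disjoint hdisj, card_insert_of_notMem hi₁t, Nat.card_Icc,
      Nat.add_sub_cancel] at this
  have hsigma := sigmaLoss_sdiff_le hC hY hSC
  have hcountR : (#Q : ℝ) + (#t + 1) ≤ m := by exact_mod_cast hcount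
  -- `k·σ ≤ k·relu + #Q·(k·Y i₁²) ≤ (k + #Q)·relu` with `k = #t + 1`
  nlinarith [reluLoss_nonneg (c := c) (Y := Y) (Icc 1 m), sq_nonneg (Y i₁)]

lemma exists_mem_approxFamily_card_mul_sigmaLoss_le (hk1 : 1 ≤ k) (hkS : k ≤ #(inactiveSet c m))
    (hY : ∀ i ∈ Icc 1 m, 0 ≤ Y i) (hmono : MonotoneOn Y (Set.Icc 1 m)) :
    ∃ I ∈ approxFamily m k, k * sigmaLoss c Y (Icc 1 m) I ≤ m * reluLoss c Y (Icc 1 m) := by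
  obtain ⟨i₁, hi₁, hcard⟩ := (inactiveSet c m).exists_mem_card_filter_lt_add_one_eq hk1 hkS
  have ht : ∀ x ∈ {x ∈ inactiveSet c m | i₁ < x}, i₁ < x ∧ x ≤ m := fun x hx => by
    simp [inactiveSet] at hx; omega
  have hi₁m : i₁ ≤ m := (mem_Icc.1 (mem_filter.1 hi₁).1).2
  refine ⟨_, sdiff_mem_approxFamily hi₁m ht (by omega), ?_⟩
  simpa only [← hcard, Nat.cast_succ] using card_mul_sigmaLoss_le hi₁ hY hmono

lemma exists_mem_approxFamily_sigmaLoss_le {n : ℕ} (hmn : m ≤ n) (hk1 : 1 ≤ k) (hkn : k ≤ n)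
    (hY : ∀ i ∈ Icc 1 m, 0 ≤ Y i) (hmono : MonotoneOn Y (Set.Icc 1 m)) :
    ∃ I ∈ approxFamily m k, sigmaLoss c Y (Icc 1 m) I ≤ n / k * reluLoss c Y (Icc 1 m) := by
  have hk0 : (0 : ℝ) < k := by exact_mod_cast hk1
  rcases lt_or_ge #(inactiveSet c m) k with hS | hS
  · obtain ⟨I, hI, hle⟩ := exists_mem_approxFamily_sigmaLoss_le_reluLoss hY hS
    refine ⟨I, hI, hle.trans (le_mul_of_one_le_left (reluLoss_nonneg _) ?_)⟩
    rw [one_le_div hk0]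
    exact_mod_cast hkn
  · obtain ⟨I, hI, hle⟩ := exists_mem_approxFamily_card_mul_sigmaLoss_le hk1 hS hY hmono
    refine ⟨I, hI, ?_⟩
    rw [div_mul_eq_mul_div, le_div_iff₀ hk0, mul_comm]
    exact hle.trans (mul_le_mul_of_nonneg_right (by exact_mod_cast hmn) (reluLoss_nonneg _))

end Selection

lemma ciInf_ciInf_le {ι κ : Type*} {f : ι → κ → ℝ} {a : ℝ} (h : ∀ i j, a ≤ f i j)
    (i : ι) (j : κ) : ⨅ i, ⨅ j, f i j ≤ f i j :=
  haveI : Nonempty κ := ⟨j⟩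
  ciInf_le_of_le ⟨a, Set.forall_mem_range.2 fun i => le_ciInf (h i)⟩ i
    (ciInf_le ⟨a, Set.forall_mem_range.2 (h i)⟩ j)

theorem approx_ratio_general {p n m k : ℕ} (hmn : m ≤ n)
    (hk1 : 1 ≤ k) (hkn : k ≤ n)
    (X : ℕ → Fin p → ℝ) (Y : ℕ → ℝ)
    (hYpos : ∀ i, 1 ≤ i → i ≤ m → 0 < Y i)
    (hYsorted : ∀ i j, 1 ≤ i → i ≤ j → j ≤ m → Y i ≤ Y j)
    (F : (Fin p → ℝ) × ℝ → ℝ)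
    (hF : ∀ b, F b =
      ∑ i ∈ Finset.Icc 1 n, (max 0 (∑ j, X i j * b.1 j + b.2) - Y i) ^ 2)
    (φ : (Fin p → ℝ) × ℝ → ℝ)
    (hφ : ∀ b, φ b =
      ∑ i ∈ Finset.Icc (m + 1) n, (max 0 (∑ j, X i j * b.1 j + b.2) - Y i) ^ 2)
    (fσ : Finset ℕ → (Fin p → ℝ) × ℝ → ℝ)
    (hfσ : ∀ I b, fσ I b =
      ∑ i ∈ I, ((∑ j, X i j * b.1 j + b.2) - Y i) ^ 2
      + ∑ i ∈ Finset.Icc 1 m \ I, sigmaFn (∑ j, X i j * b.1 j + b.2) (Y i)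
      + φ b)
    (βopt : Fin p → ℝ) (β₀opt : ℝ)
    (hmin : ∀ b : (Fin p → ℝ) × ℝ, F (βopt, β₀opt) ≤ F b)
    (zopt zapprox : ℝ)
    (hzopt : zopt = ⨅ b : (Fin p → ℝ) × ℝ, F b)
    (hzapprox : zapprox =
      ⨅ I : approxFamily m k, ⨅ b : (Fin p → ℝ) × ℝ, fσ (I : Finset ℕ) b) :
    zopt ≤ zapprox ∧ zapprox ≤ ((n : ℝ) / (k : ℝ)) * zopt := by
  let pred (b : (Fin p → ℝ) × ℝ) (i : ℕ) : ℝ := ∑ j, X i j * b.1 j + b.2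
  have hY : ∀ i ∈ Icc 1 m, 0 ≤ Y i := fun i hi => (hYpos i (mem_Icc.1 hi).1 (mem_Icc.1 hi).2).le
  have hF' : ∀ b, F b = reluLoss (pred b) Y (Icc 1 m) + φ b := fun b => by
    rw [hF, hφ]; exact (reluLoss_Icc_add hmn).symm
  have hfσ' : ∀ I b, fσ I b = sigmaLoss (pred b) Y (Icc 1 m) I + φ b := hfσ
  have hzopt' : zopt = F (βopt, β₀opt) :=
    hzopt ▸ le_antisymm (ciInf_le ⟨_, Set.forall_mem_range.2 hmin⟩ _) (le_ciInf hmin)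
  have hlow : ∀ (I : approxFamily m k) b, zopt ≤ fσ I b := fun I b => by
    rw [hzopt', hfσ']
    exact (hmin b).trans ((hF' b).trans_le (add_le_add_left (reluLoss_le_sigmaLoss I.2.1 hY) _))
  obtain ⟨I₀, hI₀, hle⟩ := exists_mem_approxFamily_sigmaLoss_le (c := pred (βopt, β₀opt)) hmn
    hk1 hkn hY fun i hi j hj hij => hYsorted i j hi.1 hij hj.2
  have : Nonempty (approxFamily m k) := ⟨⟨I₀, hI₀⟩⟩
  refine ⟨hzapprox ▸ le_ciInf fun I => le_ciInf (hlow I), ?_⟩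
  have hφ0 : 0 ≤ φ (βopt, β₀opt) := (hφ _).symm ▸ reluLoss_nonneg _
  have hnk : 1 ≤ (n : ℝ) / k := (one_le_div (by exact_mod_cast hk1)).2 (by exact_mod_cast hkn)
  calc zapprox ≤ fσ I₀ (βopt, β₀opt) := hzapprox ▸ ciInf_ciInf_le hlow ⟨I₀, hI₀⟩ _
    _ ≤ n / k * reluLoss (pred (βopt, β₀opt)) Y (Icc 1 m) + n / k * φ (βopt, β₀opt) := by
      rw [hfσ']; exact add_le_add hle (le_mul_of_one_le_left hφ0 hnk)
    _ = n / k * zopt := by rw [hzopt', hF', mul_add]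

/-- if `Y₁ ≤ … ≤ Y_m` and the infimum `z^OPT` is attained, then
`z^OPT ≤ z^approx ≤ (n / k) · z^OPT`, where `z^approx = min_{I ∈ 𝔽_k} z^σ(I)`. -/
theorem approx_ratio {p n m k : ℕ} (hp : 0 < p) (hn : 0 < n) (hmn : m ≤ n)
    (hk1 : 1 ≤ k) (hkn : k ≤ n)
    (X : ℕ → Fin p → ℝ) (Y : ℕ → ℝ)
    (hYpos : ∀ i, 1 ≤ i → i ≤ m → 0 < Y i)
    (hYneg : ∀ i, m < i → i ≤ n → Y i ≤ 0)
    (hYsorted : ∀ i j, 1 ≤ i → i ≤ j → j ≤ m → Y i ≤ Y j)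
    (F : (Fin p → ℝ) × ℝ → ℝ)
    (hF : ∀ b, F b =
      ∑ i ∈ Finset.Icc 1 n, (max 0 (∑ j, X i j * b.1 j + b.2) - Y i) ^ 2)
    (φ : (Fin p → ℝ) × ℝ → ℝ)
    (hφ : ∀ b, φ b =
      ∑ i ∈ Finset.Icc (m + 1) n, (max 0 (∑ j, X i j * b.1 j + b.2) - Y i) ^ 2)
    (fσ : Finset ℕ → (Fin p → ℝ) × ℝ → ℝ)
    (hfσ : ∀ I b, fσ I b =
      ∑ i ∈ I, ((∑ j, X i j * b.1 j + b.2) - Y i) ^ 2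
      + ∑ i ∈ Finset.Icc 1 m \ I, sigmaFn (∑ j, X i j * b.1 j + b.2) (Y i)
      + φ b)
    (βopt : Fin p → ℝ) (β₀opt : ℝ)
    (hmin : ∀ b : (Fin p → ℝ) × ℝ, F (βopt, β₀opt) ≤ F b)
    (zopt zapprox : ℝ)
    (hzopt : zopt = ⨅ b : (Fin p → ℝ) × ℝ, F b)
    (hzapprox : zapprox =
      ⨅ I : approxFamily m k, ⨅ b : (Fin p → ℝ) × ℝ, fσ (I : Finset ℕ) b) :
    zopt ≤ zapprox ∧ zapprox ≤ ((n : ℝ) / (k : ℝ)) * zopt :=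
  approx_ratio_general hmn hk1 hkn X Y hYpos hYsorted F hF φ hφ fσ hfσ βopt β₀opt hmin zopt zapprox
    hzopt hzapprox
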